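/- arXiv:1308.1045 — 2 statements merged into one kernel-verified Lean document; each statement's English description precedes it below -/
import Mathlib

section
/- Let ε > 0, ν ≥ 0, let Ω be a nonzero real number, let t ≥ 0, and let h : ℝ → ℂ be continuously differentiable on [0, t]. Then |∫₀ᵗ exp(ντ − iΩτ/ε) h(τ) dτ| ≤ (ε/|Ω|)·( exp(νt)·|h(t)| + |h(0)| + ∫₀ᵗ exp(ντ)·(ν·|h(τ)| + |h′(τ)|) dτ ). (This is the quantitative form of the oscillatory-integral estimate by which each non-resonant term in the energy balance contributes at most O(ε).) -/
open MeasureTheory intervalIntegral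

/-- Quantitative oscillatory-integral estimate: for `ε > 0`, `ν ≥ 0`, `Ω ≠ 0`,
`t ≥ 0` and `h : ℝ → ℂ` continuously differentiable on `[0, t]` with derivative `h'`,
`|∫₀ᵗ e^{ντ − iΩτ/ε} h(τ) dτ|
  ≤ (ε/|Ω|)(e^{νt}|h(t)| + |h(0)| + ∫₀ᵗ e^{ντ}(ν|h(τ)| + |h'(τ)|) dτ)`. -/
theorem oscillatory_integral_estimate
    (ε ν Ω t : ℝ) (hε : 0 < ε) (hν : 0 ≤ ν) (hΩ : Ω ≠ 0) (ht : 0 ≤ t)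
    (h h' : ℝ → ℂ)
    (hderiv : ∀ τ ∈ Set.Icc (0 : ℝ) t, HasDerivAt h (h' τ) τ)
    (hcont : ContinuousOn h' (Set.Icc (0 : ℝ) t)) :
    ‖∫ τ in (0:ℝ)..t,
        Complex.exp ((ν : ℂ) * τ - Complex.I * Ω * τ / ε) * h τ‖
      ≤ (ε / |Ω|) *
          (Real.exp (ν * t) * ‖h t‖ + ‖h 0‖
            + ∫ τ in (0:ℝ)..t,
                Real.exp (ν * τ) * (ν * ‖h τ‖ + ‖h' τ‖)) := by
  set c : ℂ := (ν : ℂ) - Complex.I * Ω / ε with hc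
  have huIcc : Set.uIcc (0:ℝ) t = Set.Icc 0 t := Set.uIcc_of_le ht
  have hcre : ∀ τ : ℝ, (c * τ).re = ν * τ := by
    intro τ; simp [hc, Complex.mul_re, Complex.sub_re, Complex.div_re]
  have hcim : c.im = -(Ω / ε) := by simp [hc]
  have hcne : c ≠ 0 := by
    intro h0
    have : c.im = 0 := by rw [h0]; simp
    rw [hcim] at this
    exact hΩ (by field_simp at this; simpa using this)
  have habsge : |Ω| / ε ≤ ‖c‖ := by
    calc |Ω| / ε = |c.im| := by rw [hcim]; rw [abs_neg, abs_div, abs_of_pos hε]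
    _ ≤ ‖c‖ := Complex.abs_im_le_norm c
  have hinv : (‖c‖)⁻¹ ≤ ε / |Ω| := by
    rw [inv_le_iff_one_le_mul₀ (lt_of_lt_of_le (by positivity) habsge)]
    calc (1:ℝ) = (ε / |Ω|) * (|Ω| / ε) := by
          field_simp
      _ ≤ (ε / |Ω|) * ‖c‖ := by
          apply mul_le_mul_of_nonneg_left habsge (by positivity)
  have hcexp : ∀ τ : ℝ, Complex.exp ((ν : ℂ) * τ - Complex.I * Ω * τ / ε)
      = Complex.exp (c * τ) := by
    intro τ; congr 1; rw [hc]; ring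
  have habse : ∀ τ : ℝ, ‖Complex.exp (c * τ)‖ = Real.exp (ν * τ) := by
    intro τ; rw [Complex.norm_exp, hcre]
  -- continuity of h on the interval
  have hhcont : ContinuousOn h (Set.Icc 0 t) := fun τ hτ =>
    (hderiv τ hτ).continuousAt.continuousWithinAt
  -- the antiderivative
  set F : ℝ → ℂ := fun τ => Complex.exp (c * τ) * h τ with hF
  have hFderiv : ∀ τ ∈ Set.uIcc (0:ℝ) t,
      HasDerivAt F (c * Complex.exp (c * τ) * h τ + Complex.exp (c * τ) * h' τ) τ := by
    intro τ hτ
    rw [huIcc] at hτ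
    have h1 : HasDerivAt (fun τ : ℝ => Complex.exp (c * τ)) (c * Complex.exp (c * τ)) τ := by
      have h0 : HasDerivAt (fun τ : ℝ => c * (τ : ℂ)) c τ := by
        simpa using (Complex.ofRealCLM.hasDerivAt (x := τ)).const_mul c
      simpa [mul_comm] using h0.cexp
    exact h1.mul (hderiv τ hτ)
  have hecont : Continuous fun τ : ℝ => Complex.exp (c * τ) :=
    Complex.continuous_exp.comp (continuous_const.mul Complex.continuous_ofReal)
  have hint1 : IntervalIntegrable (fun τ => c * Complex.exp (c * τ) * h τ) volume 0 t :=
    (((hecont.continuousOn.const_smul c).mul hhcont).mono huIcc.le).intervalIntegrable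
  have hint2 : IntervalIntegrable (fun τ => Complex.exp (c * τ) * h' τ) volume 0 t :=
    ((hecont.continuousOn.mul hcont).mono huIcc.le).intervalIntegrable
  have hftc : (∫ τ in (0:ℝ)..t,
      (c * Complex.exp (c * τ) * h τ + Complex.exp (c * τ) * h' τ)) = F t - F 0 :=
    intervalIntegral.integral_eq_sub_of_hasDerivAt hFderiv (hint1.add hint2)
  rw [intervalIntegral.integral_add hint1 hint2] at hftc
  have hsplit : (∫ τ in (0:ℝ)..t, c * Complex.exp (c * τ) * h τ)
      = c * ∫ τ in (0:ℝ)..t, Complex.exp (c * τ) * h τ := by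
    rw [← intervalIntegral.integral_const_mul]
    congr 1; ext τ; ring
  rw [hsplit] at hftc
  set I : ℂ := ∫ τ in (0:ℝ)..t, Complex.exp (c * τ) * h τ with hI
  set J : ℂ := ∫ τ in (0:ℝ)..t, Complex.exp (c * τ) * h' τ with hJ
  have hIeq : I = c⁻¹ * (F t - F 0 - J) := by
    field_simp
    linear_combination hftc
  -- rewrite the goal integrand
  have hgoal : (∫ τ in (0:ℝ)..t,
      Complex.exp ((ν : ℂ) * τ - Complex.I * Ω * τ / ε) * h τ) = I := by
    rw [hI]; congr 1; ext τ; rw [hcexp]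
  rw [hgoal, hIeq]
  -- bound |J|
  have hJbound : ‖J‖ ≤ ∫ τ in (0:ℝ)..t,
      Real.exp (ν * τ) * (ν * ‖h τ‖ + ‖h' τ‖) := by
    have h1 : ‖J‖ ≤ ∫ τ in (0:ℝ)..t, ‖Complex.exp (c * τ) * h' τ‖ := by
      simpa using intervalIntegral.norm_integral_le_integral_norm (f := fun τ =>
        Complex.exp (c * τ) * h' τ) ht
    refine h1.trans ?_
    apply intervalIntegral.integral_mono_on ht
    · apply ContinuousOn.intervalIntegrable
      rw [huIcc]
      exact ((hecont.continuousOn.mul hcont).mono (le_refl _)).norm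
    · apply ContinuousOn.intervalIntegrable
      rw [huIcc]
      have : ContinuousOn (fun τ => Real.exp (ν * τ) *
          (ν * ‖h τ‖ + ‖h' τ‖)) (Set.Icc 0 t) := by
        apply ContinuousOn.mul
        · exact (Real.continuous_exp.comp (continuous_const.mul continuous_id)).continuousOn
        · exact ((continuousOn_const.mul hhcont.norm).add hcont.norm)
      exact this
    · intro τ hτ
      rw [norm_mul, habse]
      have h2 : ‖h' τ‖ ≤ ν * ‖h τ‖ + ‖h' τ‖ := by
        nlinarith [norm_nonneg (h τ), norm_nonneg (h' τ)]
      exact mul_le_mul_of_nonneg_left h2 (Real.exp_nonneg _)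
  -- final bound
  have hInt_nonneg : (0:ℝ) ≤ ∫ τ in (0:ℝ)..t,
      Real.exp (ν * τ) * (ν * ‖h τ‖ + ‖h' τ‖) :=
    le_trans (norm_nonneg J) hJbound
  have hFt : ‖F t‖ = Real.exp (ν * t) * ‖h t‖ := by
    rw [hF]; simp only []; rw [norm_mul, habse]
  have hF0 : ‖F 0‖ = ‖h 0‖ := by
    rw [hF]; simp only []
    rw [norm_mul]
    simp
  calc ‖c⁻¹ * (F t - F 0 - J)‖
      = (‖c‖)⁻¹ * ‖F t - F 0 - J‖ := by rw [norm_mul, norm_inv]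
    _ ≤ (‖c‖)⁻¹ * (‖F t‖ + ‖F 0‖ + ‖J‖) := by
        apply mul_le_mul_of_nonneg_left _ (by positivity)
        calc ‖F t - F 0 - J‖ ≤ ‖F t - F 0‖ + ‖J‖ :=
              (norm_sub_le _ _)
          _ ≤ ‖F t‖ + ‖F 0‖ + ‖J‖ := by
              have := norm_sub_le (F t) (F 0)
              linarith
    _ ≤ (ε / |Ω|) * (Real.exp (ν * t) * ‖h t‖ + ‖h 0‖
          + ∫ τ in (0:ℝ)..t,
              Real.exp (ν * τ) * (ν * ‖h τ‖ + ‖h' τ‖)) := by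
        apply mul_le_mul hinv _ (by positivity) (by positivity)
        rw [hFt, hF0]
        linarith
end

section
/- For nonnegative integers a, b, c whose sum a + b + c = 2s is even and which satisfy the triangle inequalities a ≤ b + c, b ≤ c + a, c ≤ a + b, define W(a,b,c) := (−1)^s · √( (2s − 2a)! · (2s − 2b)! · (2s − 2c)! / (2s + 1)! ) · s! / ( (s − a)! · (s − b)! · (s − c)! ). Then for all positive integers j, k, l with J := j + k + l − 1 even and satisfying the strict triangle conditions j + k ≥ l + 1, k + l ≥ j + 1, l + j ≥ k + 1, one has W(l, k, j − 1) = W(l, j, k − 1) · √( ((l + k − j)(l + 1 + j − k)) / ((l + j − k)(l + 1 + k − j)) ). -/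
/-- The explicit value `W(a,b,c)` of the Wigner 3j symbol `(a b c; 0 0 0)`
from DLMF (34.3.5): with `s := (a+b+c)/2` (meaningful when `a+b+c` is even and
the triangle inequalities hold),
`W(a,b,c) = (−1)^s √((2s−2a)!(2s−2b)!(2s−2c)!/(2s+1)!) · s!/((s−a)!(s−b)!(s−c)!)`. -/
noncomputable def W3j (a b c : ℕ) : ℝ :=
  let s : ℕ := (a + b + c) / 2
  (-1 : ℝ)^s
    * Real.sqrt ((((2*s - 2*a).factorial * (2*s - 2*b).factorial
          * (2*s - 2*c).factorial : ℕ)) / (((2*s + 1).factorial : ℕ) : ℝ))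
    * (s.factorial : ℝ)
    / (((s - a).factorial * (s - b).factorial * (s - c).factorial : ℕ))

private lemma sqrt_mul_div_sq (P a b : ℝ) (hP : 0 ≤ P) (ha : 0 ≤ a) (hb : 0 ≤ b) :
    Real.sqrt P * a / b = Real.sqrt (P * (a / b)^2) := by
  rw [Real.sqrt_mul hP, Real.sqrt_sq (by positivity)]
  ring

private lemma key (u v w n : ℕ) :
    (-1 : ℝ)^n
      * Real.sqrt ((((2*w).factorial * (2*v).factorial * (2*u+2).factorial : ℕ))
          / (((2*n + 1).factorial : ℕ) : ℝ))
      * (n.factorial : ℝ)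
      / ((w.factorial * v.factorial * (u+1).factorial : ℕ))
    = (-1 : ℝ)^n
      * Real.sqrt ((((2*w).factorial * (2*u).factorial * (2*v+2).factorial : ℕ))
          / (((2*n + 1).factorial : ℕ) : ℝ))
      * (n.factorial : ℝ)
      / ((w.factorial * u.factorial * (v+1).factorial : ℕ))
      * Real.sqrt ((((2*u+1) * (2*v+2) : ℕ)) / (((2*v+1) * (2*u+2) : ℕ) : ℝ)) := by
  have main :
      Real.sqrt ((((2*w).factorial * (2*v).factorial * (2*u+2).factorial : ℕ))
          / (((2*n + 1).factorial : ℕ) : ℝ))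
        * (n.factorial : ℝ)
        / ((w.factorial * v.factorial * (u+1).factorial : ℕ))
      = Real.sqrt ((((2*w).factorial * (2*u).factorial * (2*v+2).factorial : ℕ))
          / (((2*n + 1).factorial : ℕ) : ℝ))
        * (n.factorial : ℝ)
        / ((w.factorial * u.factorial * (v+1).factorial : ℕ))
        * Real.sqrt ((((2*u+1) * (2*v+2) : ℕ)) / (((2*v+1) * (2*u+2) : ℕ) : ℝ)) := by
    rw [sqrt_mul_div_sq _ _ _ (by positivity) (by positivity) (by positivity),
        sqrt_mul_div_sq _ _ _ (by positivity) (by positivity) (by positivity),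
        ← Real.sqrt_mul (by positivity)]
    congr 1
    have f1 : (((2*u+2).factorial : ℕ) : ℝ)
        = (2*(u:ℝ)+2) * (2*(u:ℝ)+1) * (((2*u).factorial : ℕ) : ℝ) := by
      rw [show 2*u+2 = (2*u+1)+1 by ring, Nat.factorial_succ, Nat.factorial_succ]
      push_cast; ring
    have f2 : (((2*v+2).factorial : ℕ) : ℝ)
        = (2*(v:ℝ)+2) * (2*(v:ℝ)+1) * (((2*v).factorial : ℕ) : ℝ) := by
      rw [show 2*v+2 = (2*v+1)+1 by ring, Nat.factorial_succ, Nat.factorial_succ]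
      push_cast; ring
    have f3 : (((u+1).factorial : ℕ) : ℝ) = ((u:ℝ)+1) * ((u.factorial : ℕ) : ℝ) := by
      rw [Nat.factorial_succ]; push_cast; ring
    have f4 : (((v+1).factorial : ℕ) : ℝ) = ((v:ℝ)+1) * ((v.factorial : ℕ) : ℝ) := by
      rw [Nat.factorial_succ]; push_cast; ring
    have g1 : (((2*n+1).factorial : ℕ) : ℝ) ≠ 0 :=
      Nat.cast_ne_zero.mpr (Nat.factorial_ne_zero _)
    have g2 : ((w.factorial : ℕ) : ℝ) ≠ 0 :=
      Nat.cast_ne_zero.mpr (Nat.factorial_ne_zero _)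
    have g3 : ((v.factorial : ℕ) : ℝ) ≠ 0 :=
      Nat.cast_ne_zero.mpr (Nat.factorial_ne_zero _)
    have g4 : ((u.factorial : ℕ) : ℝ) ≠ 0 :=
      Nat.cast_ne_zero.mpr (Nat.factorial_ne_zero _)
    have g5 : (2*(u:ℝ)+1) ≠ 0 := by positivity
    have g6 : (2*(v:ℝ)+1) ≠ 0 := by positivity
    have g7 : ((u:ℝ)+1) ≠ 0 := by positivity
    have g8 : ((v:ℝ)+1) ≠ 0 := by positivity
    push_cast
    push_cast at f1 f2 f3 f4
    rw [f1, f2, f3, f4]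
    field_simp
  linear_combination ((-1 : ℝ))^n * main

/-- The key 3j-symbol identity in the proof of the non-resonance Lemma 1:
for positive integers `j, k, l` with `J := j + k + l − 1` even and satisfying
the strict triangle conditions,
`W(l, k, j−1) = W(l, j, k−1) · √(((l+k−j)(l+1+j−k)) / ((l+j−k)(l+1+k−j)))`. -/
theorem threej_ratio_identity
    (j k l : ℕ) (hj : 0 < j) (hk : 0 < k) (hl : 0 < l)
    (hJeven : Even (j + k + l - 1))
    (h1 : j + k ≥ l + 1) (h2 : k + l ≥ j + 1) (h3 : l + j ≥ k + 1) :
    W3j l k (j - 1)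
      = W3j l j (k - 1)
        * Real.sqrt ((((l + k - j) * (l + 1 + j - k) : ℕ))
            / (((l + j - k) * (l + 1 + k - j) : ℕ) : ℝ)) := by
  obtain ⟨n, hn⟩ := hJeven
  set u := n - j with hu
  set v := n - k with hv
  set w := n - l with hw
  simp only [W3j]
  have hs1 : (l + k + (j - 1)) / 2 = n := by omega
  have hs2 : (l + j + (k - 1)) / 2 = n := by omega
  rw [hs1, hs2]
  have e1 : 2 * n - 2 * l = 2 * w := by omega
  have e2 : 2 * n - 2 * k = 2 * v := by omega
  have e3 : 2 * n - 2 * (j - 1) = 2 * u + 2 := by omega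
  have e4 : n - l = w := by omega
  have e5 : n - k = v := by omega
  have e6 : n - (j - 1) = u + 1 := by omega
  have e7 : 2 * n - 2 * j = 2 * u := by omega
  have e8 : 2 * n - 2 * (k - 1) = 2 * v + 2 := by omega
  have e9 : n - j = u := by omega
  have e10 : n - (k - 1) = v + 1 := by omega
  have e11 : l + k - j = 2 * u + 1 := by omega
  have e12 : l + 1 + j - k = 2 * v + 2 := by omega
  have e13 : l + j - k = 2 * v + 1 := by omega
  have e14 : l + 1 + k - j = 2 * u + 2 := by omega
  rw [e1, e2, e3, e4, e5, e6, e7, e8, e9, e10, e11, e12, e13, e14]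
  exact key u v w n
end
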